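/- For every integer n ≥ 1, Ξ_n(0) = (−1)^n E_{2n}/(2^{2n}(2n−1)!) and Λ_n(0) = (−1)^n · 2^{2n+2}(2^{2n+2}−1) · B_{2n+2}/((2^{2n+1}−1)(2n+2)(2n)!), where E_{2n} is the 2n-th Euler (secant) number and B_{2n+2} is the (2n+2)-nd Bernoulli number. -/

import Mathlib

open Finset

/-- Type A Eulerian number ⟨m,k⟩. -/
def eulerianA (m k : ℕ) : ℤ :=
  ∑ j ∈ Finset.range (k + 1),
    (-1 : ℤ) ^ j * (Nat.choose (m + 1) j) * ((k + 1 - j : ℕ) ^ m : ℤ)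

/-- Type B Eulerian number ⟨m,k⟩^B. -/
def eulerianB (m k : ℕ) : ℤ :=
  ∑ j ∈ Finset.range (k + 1),
    (-1 : ℤ) ^ j * (Nat.choose (m + 1) j) * ((2 * (k - j) + 1 : ℕ) ^ m : ℤ)

/-- Inner sum Σ_{i=0}^{k} (−1)^i binom(k,i) binom(2n−2k−1, 2t−2i+1), with the
convention that the binomial vanishes when the lower index is negative. -/
def innerSum (n k t : ℕ) : ℤ :=
  ∑ i ∈ Finset.range (k + 1),
    if i ≤ t then
      (-1 : ℤ) ^ i * (Nat.choose k i) * (Nat.choose (2 * n - 2 * k - 1) (2 * (t - i) + 1))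
    else 0

/-- Coefficient C^B_{n,t}. -/
def CB (n t : ℕ) : ℤ :=
  ∑ k ∈ Finset.range n, eulerianB (2 * n - 1) k * (-1) ^ k * innerSum n k t

/-- Coefficient C^A_{n,t}. -/
def CA (n t : ℕ) : ℤ :=
  ∑ k ∈ Finset.range n, eulerianA (2 * n) k * (-1) ^ k * innerSum n k t

/-- The even polynomial Ξ_n, as a function on ℝ. -/
noncomputable def Xi (n : ℕ) (x : ℝ) : ℝ :=
  ((-1 : ℝ) ^ (n + 1) / (2 ^ (4 * n - 2) * (Nat.factorial (2 * n - 1)))) *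
    ∑ t ∈ Finset.range n, (CB n t : ℝ) * x ^ (2 * t)

/-- The even polynomial Λ_n, as a function on ℝ. -/
noncomputable def Lam (n : ℕ) (x : ℝ) : ℝ :=
  (2 * (-1 : ℝ) ^ (n + 1) / ((2 ^ (2 * n + 1) - 1) * (Nat.factorial (2 * n)))) *
    ∑ t ∈ Finset.range n, (CA n t : ℝ) * x ^ (2 * t)

/-- Euler (secant) numbers: E 0 = 1, E n = 0 for odd n, and for even n ≥ 2,
E n = −Σ_{j<n} C(n,j) E j (the odd-index terms vanish); this is equivalent to the
exponential generating function 2/(e^x+e^{−x}) = Σ_{n≥0} E_n x^n/n!. -/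
def secantE : ℕ → ℚ
  | 0 => 1
  | (n + 1) =>
    if (n + 1) % 2 = 1 then 0
    else -∑ j ∈ (Finset.range (n + 1)).attach,
      (Nat.choose (n + 1) j.1 : ℚ) * secantE j.1
  decreasing_by exact Nat.lt_succ_iff.mpr (Nat.lt_succ_iff.mp (Finset.mem_range.mp j.2))

/-!
Both kinds of Eulerian numbers are instances of
`e_{a,b}(m, k) = ∑_{j ≤ k} (-1)^j C(m+1, j) (a (k - j) + b)^m`, type A being `(a, b) = (1, 1)`
and type B `(2, 1)`. At `x = 0` only `t = 0` survives, and `C_{n,0}` is the weighted alternating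
sum `∑_{k<n} (-1)^k (2n-1-2k) e(m, k)`. The recurrence for `e` turns the full alternating sum
`∑_k (-1)^k e(m+1, k)` into exactly such a weighted sum over `k ≤ m`, and the symmetry
`e_{a,b}(m, k) = e_{a,a-b}(m, m-k)` shows that the half range `k < n` carries half of it.

The full alternating sum is `2^m c_m` as soon as the exponential generating function
`g = ∑ c_m t^m / m!` satisfies `g (e^{at} + 1) = 2 e^t`: the polynomial
`Q(x) = m! [t^m] g e^{axt}` solves `Q(x+1) + Q(x) = 2 (ax+1)^m`, which telescopes the partial
alternating sums, and its `(m+1)`-st finite difference vanishes. For type B, `g` is the secant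
series `2/(e^t + e^{-t})`; for type A, `g = 2 - 2/(e^t + 1)`, and
`1/(e^t + 1) = 1/(e^t - 1) - 2/(e^{2t} - 1)` brings in the Bernoulli numbers.
-/

open scoped Nat

section

variable {R : Type*} [CommRing R]

theorem Nat.cast_choose_succ_mul_succ (n j : ℕ) :
    (n.choose (j + 1) : R) * (j + 1) = n.choose j * (n - j) := by
  rcases le_or_gt j n with h | h
  · have := congrArg (Nat.cast : ℕ → R) (Nat.choose_succ_right_eq n j)
    push_cast [Nat.cast_sub h] at this
    exact this
  · simp [Nat.choose_eq_zero_of_lt h, Nat.choose_eq_zero_of_lt (h.trans (lt_add_one j))]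

theorem Polynomial.sum_range_neg_one_pow_mul_choose_mul_eval_eq_zero {P : Polynomial R} {n : ℕ}
    (hP : P.natDegree < n) :
    ∑ k ∈ range (n + 1), (-1) ^ k * n.choose k * P.eval (k : R) = 0 := by
  have h := congr_fun (Polynomial.fwdDiff_iter_eq_zero_of_degree_lt hP) 0
  rw [fwdDiff_iter_eq_sum_shift, Pi.zero_apply] at h
  rw [← mul_zero ((-1 : R) ^ n), ← h, mul_sum]
  refine sum_congr rfl fun k hk => ?_
  obtain ⟨d, rfl⟩ := Nat.exists_eq_add_of_le (mem_range_succ_iff.1 hk)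
  have hd : (-1 : R) ^ d * (-1) ^ d = 1 := by rw [← pow_add, Even.neg_one_pow ⟨d, rfl⟩]
  simp only [Nat.add_sub_cancel_left, zsmul_eq_mul, Int.cast_mul, Int.cast_pow, Int.cast_neg,
    Int.cast_one, Int.cast_natCast, zero_add, nsmul_eq_mul, mul_one]
  linear_combination -(-1 : R) ^ k * ((k + d).choose k) * P.eval (k : R) * hd

theorem two_mul_sum_range_neg_one_pow_mul_of_add_eq (f Q : ℕ → R)
    (hQ : ∀ l, Q (l + 1) + Q l = 2 * f l) (L : ℕ) :
    2 * ∑ l ∈ range L, (-1) ^ l * f l = Q 0 - (-1) ^ L * Q L := by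
  induction L with
  | zero => simp
  | succ L ih =>
    rw [sum_range_succ, mul_add, ih]
    linear_combination -(-1) ^ L * hQ L

theorem sum_range_two_mul_neg_one_pow_mul {n : ℕ} (u : ℕ → R)
    (hu : ∀ k < n, u (2 * n - 1 - k) = -u k) :
    ∑ k ∈ range (2 * n), (-1) ^ k * u k = 2 * ∑ k ∈ range n, (-1) ^ k * u k := by
  rw [two_mul n, sum_range_add, two_mul,
    ← sum_range_reflect (fun k => (-1) ^ (n + k) * u (n + k)) n]
  congr 1
  refine sum_congr rfl fun k hk => ?_
  have hk := mem_range.1 hk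
  rw [show n + (n - 1 - k) = n + n - 1 - k by omega, ← two_mul, hu k hk,
    neg_one_pow_congr (n := k + 1) (by simp only [Nat.even_iff]; omega), pow_succ]
  ring

def affineEulerian (a b : R) (m k : ℕ) : R :=
  ∑ j ∈ range (k + 1), (-1) ^ j * (m + 1).choose j * (a * ((k : R) - j) + b) ^ m

namespace affineEulerian

open Polynomial in
theorem sum_range_eq_zero (a b x : R) (m : ℕ) :
    ∑ j ∈ range (m + 2), (-1) ^ j * (m + 1).choose j * (a * (x - j) + b) ^ m = 0 := by
  have hlin : (C a * (C x - X) + C b).natDegree ≤ 1 := by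
    compute_degree
  simpa using Polynomial.sum_range_neg_one_pow_mul_choose_mul_eval_eq_zero
    ((Polynomial.natDegree_pow_le_of_le m hlin).trans_lt (by omega : m * 1 < m + 1))

variable (a b : R)

theorem zero_right (m : ℕ) : affineEulerian a b m 0 = b ^ m := by
  simp [affineEulerian]

theorem succ_self (m : ℕ) : affineEulerian a b m (m + 1) = 0 := by
  simpa [affineEulerian] using sum_range_eq_zero a b ((m + 1 : ℕ) : R) m

theorem succ_succ (m k : ℕ) :
    affineEulerian a b (m + 1) (k + 1) =
      (a * (k + 1) + b) * affineEulerian a b m (k + 1) +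
        (a * (m - k) + a - b) * affineEulerian a b m k := by
  simp only [affineEulerian]
  rw [sum_range_succ', sum_range_succ' _ (k + 1)]
  conv_rhs => rw [mul_add, add_right_comm, mul_sum, mul_sum, ← sum_add_distrib]
  congr 1
  · refine sum_congr rfl fun j _ => ?_
    have hswap := Nat.cast_choose_succ_mul_succ (R := R) (m + 1) j
    rw [Nat.choose_succ_succ' (m + 1) j]
    push_cast at hswap ⊢
    linear_combination (-1) ^ j * (a * (↑k - ↑j) + b) ^ m * a * hswap
  · push_cast [Nat.choose_zero_right]
    ring

theorem symm {m k : ℕ} (hk : k ≤ m) :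
    affineEulerian a b m k = affineEulerian a (a - b) m (m - k) := by
  -- the sum over all `j ≤ m + 1` vanishes, and the tail `j > k` reflects to the right-hand side
  have hsplit := sum_range_add
    (fun j => (-1 : R) ^ j * (m + 1).choose j * (a * ((k : R) - j) + b) ^ m) (k + 1) (m - k + 1)
  rw [show k + 1 + (m - k + 1) = m + 2 by omega, sum_range_eq_zero,
    ← sum_range_reflect _ (m - k + 1)] at hsplit
  rw [affineEulerian, eq_neg_of_add_eq_zero_left hsplit.symm, affineEulerian, ← sum_neg_distrib]
  refine sum_congr rfl fun x hx => ?_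
  have hx : x ≤ m - k := mem_range_succ_iff.1 hx
  obtain ⟨d, rfl⟩ : ∃ d, m = x + d := ⟨m - x, by omega⟩
  have hd : (-1 : R) ^ d * (-1) ^ d = 1 := by rw [← pow_add, Even.neg_one_pow ⟨d, rfl⟩]
  set y := a * (↑(x + d) - ↑k - ↑x) + (a - b)
  rw [show k + 1 + (x + d - k + 1 - 1 - x) = x + d + 1 - x by omega,
    Nat.choose_symm (by omega), show x + d + 1 - x = d + 1 by omega, Nat.cast_sub hk,
    show a * ((k : R) - ↑(d + 1 : ℕ)) + b = -y by push_cast [y]; ring, neg_pow y]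
  linear_combination (-1) ^ x * ((x + d + 1).choose x : R) * y ^ (x + d) * hd

theorem const_zero_succ {m : ℕ} (hm : m ≠ 0) (k : ℕ) :
    affineEulerian a 0 m (k + 1) = affineEulerian a a m k := by
  rw [affineEulerian, sum_range_succ, sub_self, mul_zero, zero_add, zero_pow hm, mul_zero,
    add_zero, affineEulerian]
  refine sum_congr rfl fun j _ => ?_
  push_cast
  ring

theorem self_symm {m k : ℕ} (hm : m ≠ 0) (hk : k < m) :
    affineEulerian a a m k = affineEulerian a a m (m - 1 - k) := by
  rw [symm a a hk.le, sub_self, show m - k = m - 1 - k + 1 by omega, const_zero_succ a hm]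

theorem self_self {m : ℕ} (hm : m ≠ 0) : affineEulerian a a m m = 0 := by
  rw [symm a a le_rfl, sub_self, Nat.sub_self, zero_right, zero_pow hm]

theorem sum_alternating_succ (m : ℕ) :
    ∑ k ∈ range (m + 2), (-1) ^ k * affineEulerian a b (m + 1) k =
      ∑ k ∈ range (m + 1),
        (-1) ^ k * (a * (2 * k - m - 1) + 2 * b) * affineEulerian a b m k := by
  set f : ℕ → R := fun k => (-1) ^ k * (a * k + b) * affineEulerian a b m k
  have hshift :
      ∑ k ∈ range (m + 1), f (k + 1) = ∑ k ∈ range (m + 1), f k - b ^ (m + 1) := by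
    have h := sum_range_succ' f (m + 1)
    rw [sum_range_succ] at h
    simp only [f, succ_self, zero_right, mul_zero, add_zero] at h
    rw [h]
    ring
  have hterm : ∀ k ∈ range (m + 1), (-1) ^ (k + 1) * affineEulerian a b (m + 1) (k + 1) =
      f (k + 1) - (-1) ^ k * (a * (m - k) + a - b) * affineEulerian a b m k := by
    intro k _
    simp only [f, succ_succ]
    push_cast
    ring
  rw [sum_range_succ', sum_congr rfl hterm, sum_sub_distrib, hshift, zero_right, pow_zero,
    one_mul, sub_right_comm, sub_add_cancel, ← sum_sub_distrib]
  exact sum_congr rfl fun k _ => by ring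

theorem sum_alternating_eq_sum_choose_mul (m : ℕ) :
    ∑ k ∈ range (m + 1), (-1) ^ k * affineEulerian a b m k =
      ∑ j ∈ range (m + 1), ((m + 1).choose j : R) *
        ∑ l ∈ range (m + 1 - j), (-1) ^ l * (a * l + b) ^ m := by
  simp only [mul_sum]
  rw [← sum_range_diag_flip]
  simp only [affineEulerian, mul_sum]
  refine sum_congr rfl fun k _ => sum_congr rfl fun j hj => ?_
  obtain ⟨l, rfl⟩ := Nat.exists_eq_add_of_le (mem_range_succ_iff.1 hj)
  have hj : (-1 : R) ^ j * (-1) ^ j = 1 := by rw [← pow_add, Even.neg_one_pow ⟨j, rfl⟩]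
  simp only [Nat.add_sub_cancel_left]
  push_cast
  linear_combination (-1) ^ l * ((m + 1).choose j : R) * (a * l + b) ^ m * hj

theorem two_mul_sum_alternating_eq {m : ℕ} (Q : Polynomial R) (hQ : Q.natDegree ≤ m)
    (hrec : ∀ M : ℕ, Q.eval ((M : R) + 1) + Q.eval (M : R) = 2 * (a * M + b) ^ m) :
    2 * ∑ k ∈ range (m + 1), (-1) ^ k * affineEulerian a b m k = 2 ^ (m + 1) * Q.eval 0 := by
  have htelescope := two_mul_sum_range_neg_one_pow_mul_of_add_eq (fun l => (a * l + b) ^ m)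
    (fun l => Q.eval (l : R)) fun l => by simpa using hrec l
  have hvanish : ∑ j ∈ range (m + 2), ((m + 1).choose j : R) *
      ((-1) ^ (m + 1 - j) * Q.eval ((m + 1 - j : ℕ) : R)) = 0 := by
    rw [← Polynomial.sum_range_neg_one_pow_mul_choose_mul_eval_eq_zero
      (hQ.trans_lt (lt_add_one m)), ← sum_range_reflect]
    refine sum_congr rfl fun j hj => ?_
    rw [show m + 1 + 1 - 1 - j = m + 1 - j by omega, Nat.choose_symm (by grind),
      Nat.sub_sub_self (by grind)]
    ring
  have hchoose : ∑ j ∈ range (m + 2), ((m + 1).choose j : R) = 2 ^ (m + 1) := by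
    rw [← Nat.cast_sum, Nat.sum_range_choose]
    push_cast
    rfl
  have hext := sum_range_succ (fun j => ((m + 1).choose j : R) *
    (Q.eval 0 - (-1) ^ (m + 1 - j) * Q.eval ((m + 1 - j : ℕ) : R))) (m + 1)
  -- the extra term `j = m + 1` is `Q 0 - Q 0`
  simp only [Nat.sub_self, pow_zero, Nat.cast_zero, one_mul, sub_self, mul_zero, add_zero] at hext
  rw [sum_alternating_eq_sum_choose_mul, mul_sum]
  simp only [mul_left_comm (2 : R), htelescope, Nat.cast_zero]
  rw [← hext, sum_congr rfl fun j _ => mul_sub _ _ _, sum_sub_distrib, ← sum_mul, hchoose,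
    hvanish, sub_zero]

theorem sum_alternating_two_mul_self {n : ℕ} (hn : n ≠ 0) :
    ∑ k ∈ range (2 * n + 1), (-1) ^ k * affineEulerian (2 * b) b (2 * n) k =
      -4 * b * ∑ k ∈ range n,
        (-1) ^ k * ((2 * n - 1 - 2 * k) * affineEulerian (2 * b) b (2 * n - 1) k) := by
  obtain ⟨m, rfl⟩ : ∃ m, n = m + 1 := ⟨n - 1, by omega⟩
  have hhalf := sum_range_two_mul_neg_one_pow_mul (n := m + 1)
    (fun k => (2 * (m + 1 : ℕ) - 1 - 2 * k : R) * affineEulerian (2 * b) b (2 * m + 1) k)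
    fun k hk => by
      rw [show 2 * (m + 1) - 1 - k = 2 * m + 1 - k by omega, Nat.cast_sub (by omega),
        symm (2 * b) b (Nat.sub_le _ k), Nat.sub_sub_self (by omega), two_mul b,
        add_sub_cancel_right]
      push_cast
      ring
  rw [show 2 * (m + 1) - 1 = 2 * m + 1 by omega, show 2 * (m + 1) = 2 * m + 1 + 1 by ring,
    sum_alternating_succ, show (-4 : R) * b = -2 * b * 2 by ring, mul_assoc (-2 * b), ← hhalf,
    mul_sum]
  refine sum_congr rfl fun k _ => ?_
  push_cast
  ring

theorem sum_alternating_self_two_mul_add_one {n : ℕ} (hn : n ≠ 0) :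
    ∑ k ∈ range (2 * n + 2), (-1) ^ k * affineEulerian a a (2 * n + 1) k =
      -2 * a * ∑ k ∈ range n,
        (-1) ^ k * ((2 * n - 1 - 2 * k) * affineEulerian a a (2 * n) k) := by
  have hhalf := sum_range_two_mul_neg_one_pow_mul (n := n)
    (fun k => (2 * n - 1 - 2 * k : R) * affineEulerian a a (2 * n) k) fun k hk => by
      rw [Nat.cast_sub (by omega), Nat.cast_sub (by omega),
        self_symm a (by omega : 2 * n ≠ 0) (by omega : 2 * n - 1 - k < 2 * n),
        show 2 * n - 1 - (2 * n - 1 - k) = k by omega]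
      push_cast
      ring
  rw [sum_alternating_succ, sum_range_succ, self_self a (by omega : 2 * n ≠ 0), mul_zero,
    add_zero, show (-2 : R) * a = -a * 2 by ring, mul_assoc (-a), ← hhalf, mul_sum]
  refine sum_congr rfl fun k _ => ?_
  push_cast
  ring

end affineEulerian

theorem eulerianB_eq_affineEulerian (m k : ℕ) : (eulerianB m k : R) = affineEulerian 2 1 m k := by
  simp only [eulerianB, affineEulerian]
  push_cast
  refine sum_congr rfl fun j hj => ?_
  rw [Nat.cast_sub (mem_range_succ_iff.1 hj)]

theorem eulerianA_eq_affineEulerian (m k : ℕ) : (eulerianA m k : R) = affineEulerian 1 1 m k := by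
  simp only [eulerianA, affineEulerian]
  push_cast
  refine sum_congr rfl fun j hj => ?_
  rw [Nat.cast_sub (by have := mem_range_succ_iff.1 hj; omega)]
  push_cast
  ring

theorem innerSum_zero_right (n k : ℕ) : innerSum n k 0 = (2 * n - 2 * k - 1 : ℕ) := by
  rw [innerSum, sum_eq_single_of_mem 0 (by simp)]
  · simp
  · intro i _ hi
    simp [hi]

theorem cast_CB_zero (n : ℕ) : (CB n 0 : R) =
    ∑ k ∈ range n,
      (-1) ^ k * ((2 * n - 1 - 2 * k) * affineEulerian (2 : R) 1 (2 * n - 1) k) := by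
  simp only [CB, innerSum_zero_right]
  push_cast
  refine sum_congr rfl fun k hk => ?_
  have hk := mem_range.1 hk
  rw [eulerianB_eq_affineEulerian, Nat.cast_sub (by omega), Nat.cast_sub (by omega)]
  push_cast
  ring

theorem cast_CA_zero (n : ℕ) : (CA n 0 : R) =
    ∑ k ∈ range n, (-1) ^ k * ((2 * n - 1 - 2 * k) * affineEulerian (1 : R) 1 (2 * n) k) := by
  simp only [CA, innerSum_zero_right]
  push_cast
  refine sum_congr rfl fun k hk => ?_
  have hk := mem_range.1 hk
  rw [eulerianA_eq_affineEulerian, Nat.cast_sub (by omega), Nat.cast_sub (by omega)]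
  push_cast
  ring

end

section PowerSeries

open PowerSeries

theorem rescale_two_exp : rescale 2 (exp ℚ) = exp ℚ * exp ℚ := by
  simpa [one_add_one_eq_two] using (exp_mul_exp_eq_exp_add (A := ℚ) 1 1).symm

theorem factorial_mul_coeff_mul_rescale_exp (f : ℚ⟦X⟧) (x : ℚ) (m : ℕ) :
    m ! * coeff m (f * rescale x (exp ℚ)) =
      ∑ j ∈ range (m + 1), m.choose j * (j ! * coeff j f) * x ^ (m - j) := by
  rw [coeff_mul, Finset.Nat.sum_antidiagonal_eq_sum_range_succ
    (fun i j => coeff i f * coeff j (rescale x (exp ℚ))), mul_sum]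
  refine sum_congr rfl fun j hj => ?_
  rw [coeff_rescale, coeff_exp,
    ← Nat.choose_mul_factorial_mul_factorial (mem_range_succ_iff.1 hj)]
  simp only [Algebra.algebraMap_self, RingHom.id_apply, Nat.cast_mul]
  field_simp

theorem exists_polynomial_eval_add_one_add_eval {g : ℚ⟦X⟧} {a : ℚ}
    (hg : g * (rescale a (exp ℚ) + 1) = 2 * exp ℚ) (m : ℕ) :
    ∃ Q : Polynomial ℚ, Q.natDegree ≤ m ∧ Q.eval 0 = m ! * coeff m g ∧
      ∀ x, Q.eval (x + 1) + Q.eval x = 2 * (a * x + 1) ^ m := by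
  set Q : Polynomial ℚ := ∑ j ∈ range (m + 1),
    Polynomial.C (m.choose j * (j ! * coeff j g) * a ^ (m - j)) * Polynomial.X ^ (m - j)
  have hQ : ∀ x, Q.eval x = m ! * coeff m (g * rescale (a * x) (exp ℚ)) := fun x => by
    simp only [Q, Polynomial.eval_finsetSum, Polynomial.eval_mul, Polynomial.eval_C,
      Polynomial.eval_pow, Polynomial.eval_X, factorial_mul_coeff_mul_rescale_exp, mul_pow,
      mul_assoc]
  refine ⟨Q, ?_, ?_, fun x => ?_⟩
  · exact Polynomial.natDegree_sum_le_of_forall_le _ _ fun j _ =>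
      (Polynomial.natDegree_C_mul_X_pow_le _ _).trans (Nat.sub_le m j)
  · rw [hQ, mul_zero, rescale_zero_apply]
    simp
  · have hshift : rescale (a * (x + 1)) (exp ℚ) =
        rescale a (exp ℚ) * rescale (a * x) (exp ℚ) := by
      rw [exp_mul_exp_eq_exp_add, mul_add_one, add_comm (a * x)]
    have hsum : rescale (1 + a * x) (exp ℚ) = exp ℚ * rescale (a * x) (exp ℚ) := by
      rw [← exp_mul_exp_eq_exp_add, rescale_one, RingHom.id_apply]
    rw [hQ, hQ, ← mul_add, ← map_add, hshift,
      show g * (rescale a (exp ℚ) * rescale (a * x) (exp ℚ)) + g * rescale (a * x) (exp ℚ)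
        = g * (rescale a (exp ℚ) + 1) * rescale (a * x) (exp ℚ) by ring,
      hg, mul_assoc, ← hsum, show (2 : ℚ⟦X⟧) = C 2 from rfl, coeff_C_mul, coeff_rescale,
      coeff_exp]
    simp only [Algebra.algebraMap_self, RingHom.id_apply]
    field_simp
    ring

theorem affineEulerian.sum_alternating_eq_of_mul_rescale_exp_add_one {g : ℚ⟦X⟧} {a : ℚ}
    (hg : g * (rescale a (exp ℚ) + 1) = 2 * exp ℚ) (m : ℕ) :
    ∑ k ∈ range (m + 1), (-1) ^ k * affineEulerian a 1 m k = 2 ^ m * (m ! * coeff m g) := by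
  obtain ⟨Q, hdeg, hQ0, hQ⟩ := exists_polynomial_eval_add_one_add_eval hg m
  have h := affineEulerian.two_mul_sum_alternating_eq a 1 Q hdeg fun M => hQ M
  rw [hQ0, pow_succ] at h
  linarith

theorem secantE_of_odd {k : ℕ} (hk : Odd k) : secantE k = 0 := by
  obtain ⟨n, rfl⟩ : ∃ n, k = n + 1 := ⟨k - 1, by grind⟩
  rw [secantE, if_pos (Nat.odd_iff.1 hk)]

theorem sum_range_choose_mul_secantE {s : ℕ} (hs : Even s) (h0 : s ≠ 0) :
    ∑ j ∈ range (s + 1), (s.choose j : ℚ) * secantE j = 0 := by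
  obtain ⟨n, rfl⟩ : ∃ n, s = n + 1 := ⟨s - 1, by omega⟩
  rw [sum_range_succ, secantE, if_neg (by grind), sum_attach (range (n + 1))
    (fun j => ((n + 1).choose j : ℚ) * secantE j), Nat.choose_self]
  ring

def secantEGF : ℚ⟦X⟧ := mk fun n => secantE n / n !

theorem factorial_mul_coeff_secantEGF (n : ℕ) : n ! * coeff n secantEGF = secantE n := by
  rw [secantEGF, coeff_mk]
  field_simp

theorem secantEGF_mul_exp_add_exp_neg : secantEGF * (exp ℚ + rescale (-1) (exp ℚ)) = 2 := by
  ext s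
  refine mul_left_cancel₀ (by positivity : (s ! : ℚ) ≠ 0) ?_
  have hexp : secantEGF * exp ℚ = secantEGF * rescale 1 (exp ℚ) := by simp
  rw [mul_add, map_add, mul_add, hexp, factorial_mul_coeff_mul_rescale_exp,
    factorial_mul_coeff_mul_rescale_exp, ← sum_add_distrib]
  simp only [factorial_mul_coeff_secantEGF, one_pow, mul_one]
  -- odd `j` contribute nothing, even `j` see the sign `(-1) ^ s`
  have hterm : ∀ j ∈ range (s + 1), (s.choose j : ℚ) * secantE j +
      s.choose j * secantE j * (-1) ^ (s - j) = (1 + (-1) ^ s) * (s.choose j * secantE j) := by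
    intro j hj
    rcases Nat.even_or_odd j with hj' | hj'
    · have hsign : (-1 : ℚ) ^ s = (-1) ^ (s - j) := by
        conv_lhs => rw [← Nat.sub_add_cancel (mem_range_succ_iff.1 hj)]
        rw [pow_add, hj'.neg_one_pow, mul_one]
      rw [hsign]
      ring
    · simp [secantE_of_odd hj']
  rw [sum_congr rfl hterm, ← mul_sum, ← map_ofNat (C (R := ℚ)) 2, coeff_C]
  rcases Nat.even_or_odd s with he | ho
  · by_cases h0 : s = 0
    · subst h0
      norm_num [secantE]
    · rw [sum_range_choose_mul_secantE he h0, if_neg h0, mul_zero, mul_zero]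
  · rw [ho.neg_one_pow, if_neg (by rintro rfl; simp at ho)]
    simp

theorem secantEGF_mul_rescale_two_exp_add_one :
    secantEGF * (rescale 2 (exp ℚ) + 1) = 2 * exp ℚ := by
  have h0 : rescale (-1) (exp ℚ) * exp ℚ = 1 := by
    simpa using exp_mul_exp_eq_exp_add (A := ℚ) (-1) 1
  linear_combination exp ℚ * secantEGF_mul_exp_add_exp_neg + secantEGF * rescale_two_exp -
    secantEGF * h0

def genocchi (n : ℕ) : ℚ := 2 * (1 - 2 ^ n) * bernoulli n

theorem X_mul_mk_genocchi_succ :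
    X * PowerSeries.mk (fun n => genocchi (n + 1) / (n + 1)!) =
      2 * (bernoulliPowerSeries ℚ - rescale 2 (bernoulliPowerSeries ℚ)) := by
  ext n
  rw [show (2 : ℚ⟦X⟧) = C 2 from rfl, coeff_C_mul]
  rcases n with _ | n
  · simp only [coeff_zero_X_mul, map_sub, coeff_rescale]
    simp [bernoulliPowerSeries]
  · rw [coeff_succ_X_mul]
    simp only [genocchi, coeff_mk, bernoulliPowerSeries, Algebra.algebraMap_self,
      RingHom.id_apply, map_sub, coeff_rescale]
    ring

theorem mk_genocchi_succ_mul_exp_add_one :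
    PowerSeries.mk (fun n => genocchi (n + 1) / (n + 1)!) * (exp ℚ + 1) = 2 := by
  have hβ := bernoulliPowerSeries_mul_exp_sub_one ℚ
  have hβ2 : rescale 2 (bernoulliPowerSeries ℚ) * (rescale 2 (exp ℚ) - 1) = 2 * X := by
    rw [← map_ofNat C 2, ← rescale_X, ← hβ, map_mul, map_sub, map_one]
  have hne : (X * (exp ℚ - 1) : ℚ⟦X⟧) ≠ 0 := by
    refine mul_ne_zero X_ne_zero fun h => ?_
    simpa using congrArg (coeff 1) h
  -- after multiplying by `X (e^X - 1)` both sides are `2 X (e^X - 1)`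
  refine mul_left_cancel₀ hne ?_
  linear_combination (exp ℚ - 1) * (exp ℚ + 1) * X_mul_mk_genocchi_succ +
    2 * (exp ℚ + 1) * hβ - 2 * hβ2 + 2 * rescale 2 (bernoulliPowerSeries ℚ) * rescale_two_exp

noncomputable def twoExpDivExpAddOne : ℚ⟦X⟧ :=
  2 - PowerSeries.mk fun n => genocchi (n + 1) / (n + 1)!

theorem twoExpDivExpAddOne_mul_exp_add_one :
    twoExpDivExpAddOne * (rescale 1 (exp ℚ) + 1) = 2 * exp ℚ := by
  rw [twoExpDivExpAddOne, rescale_one, RingHom.id_apply]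
  linear_combination -mk_genocchi_succ_mul_exp_add_one

theorem factorial_mul_coeff_twoExpDivExpAddOne {m : ℕ} (hm : m ≠ 0) :
    m ! * coeff m twoExpDivExpAddOne = 2 * (2 ^ (m + 1) - 1) * bernoulli (m + 1) / (m + 1) := by
  rw [twoExpDivExpAddOne, map_sub, ← map_ofNat C 2, coeff_C, if_neg hm, coeff_mk,
    Nat.factorial_succ, genocchi]
  push_cast
  field_simp
  ring

end PowerSeries

theorem cast_CB_zero_eq {n : ℕ} (hn : n ≠ 0) :
    (CB n 0 : ℚ) = -(2 ^ (2 * n) * secantE (2 * n)) / 4 := by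
  have h := affineEulerian.sum_alternating_two_mul_self (1 : ℚ) hn
  rw [mul_one, affineEulerian.sum_alternating_eq_of_mul_rescale_exp_add_one
    secantEGF_mul_rescale_two_exp_add_one, factorial_mul_coeff_secantEGF] at h
  rw [cast_CB_zero]
  linear_combination (1 / 4 : ℚ) * h

theorem cast_CA_zero_eq {n : ℕ} (hn : n ≠ 0) :
    (CA n 0 : ℚ) = -(2 ^ (2 * n + 1) * (2 ^ (2 * n + 2) - 1) * bernoulli (2 * n + 2)) /
      (2 * n + 2) := by
  have h := affineEulerian.sum_alternating_self_two_mul_add_one (1 : ℚ) hn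
  rw [affineEulerian.sum_alternating_eq_of_mul_rescale_exp_add_one
    twoExpDivExpAddOne_mul_exp_add_one, factorial_mul_coeff_twoExpDivExpAddOne (by omega)] at h
  rw [cast_CA_zero]
  push_cast at h
  rw [show 2 * n + 1 + 1 = 2 * n + 2 by ring] at h
  linear_combination (1 / 2 : ℚ) * h

theorem sum_range_mul_zero_pow_two_mul {R : Type*} [Semiring R] {n : ℕ} (hn : n ≠ 0)
    (f : ℕ → R) : ∑ t ∈ range n, f t * 0 ^ (2 * t) = f 0 := by
  rw [sum_eq_single_of_mem 0 (mem_range.2 (Nat.pos_of_ne_zero hn))]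
  · simp
  · intro t _ ht
    simp [ht]

theorem values_at_zero (n : ℕ) (hn : 1 ≤ n) :
    Xi n 0 = (-1 : ℝ) ^ n * (secantE (2 * n) : ℝ) /
      (2 ^ (2 * n) * (Nat.factorial (2 * n - 1))) ∧
    Lam n 0 = (-1 : ℝ) ^ n * 2 ^ (2 * n + 2) * (2 ^ (2 * n + 2) - 1) *
      ((bernoulli (2 * n + 2) : ℚ) : ℝ) /
      ((2 ^ (2 * n + 1) - 1) * (2 * n + 2) * (Nat.factorial (2 * n))) := by
  have hn0 : n ≠ 0 := by omega
  have hB : (CB n 0 : ℝ) = -(2 ^ (2 * n) * (secantE (2 * n) : ℝ)) / 4 := by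
    exact_mod_cast congrArg (Rat.cast : ℚ → ℝ) (cast_CB_zero_eq hn0)
  have hA : (CA n 0 : ℝ) = -(2 ^ (2 * n + 1) * (2 ^ (2 * n + 2) - 1) *
      ((bernoulli (2 * n + 2) : ℚ) : ℝ)) / (2 * n + 2) := by
    exact_mod_cast congrArg (Rat.cast : ℚ → ℝ) (cast_CA_zero_eq hn0)
  rw [Xi, Lam, sum_range_mul_zero_pow_two_mul hn0, sum_range_mul_zero_pow_two_mul hn0, hA, hB]
  obtain ⟨m, rfl⟩ : ∃ m, n = m + 1 := ⟨n - 1, by omega⟩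
  rw [show 4 * (m + 1) - 2 = 2 * (m + 1) + 2 * m by omega,
    show 2 * (m + 1) - 1 = 2 * m + 1 by omega]
  have h1 : (2 : ℝ) ^ (2 * (m + 1) + 1) - 1 ≠ 0 := by
    have : (1 : ℝ) < 2 ^ (2 * (m + 1) + 1) := one_lt_pow₀ (by norm_num) (by omega)
    linarith
  constructor
  · field_simp
    ring
  · field_simp
    ring
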